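/- Let (X^{(n)})_{n≥0} and (X̃^{(n)})_{n≥0} be two Markov chains, each marginally with invariant distribution π and with X^{(n)} and X̃^{(n)} having the same marginal distribution for every n, coupled so that there is an almost surely finite random time τ with X^{(n)} = X̃^{(n-1)} for all n ≥ τ. If E[h(X^{(n)})] → π(h), Σ_{n≥1} E[|h(X^{(n)}) - h(X̃^{(n-1)})|] < ∞, and interchange of sum and expectation is valid, then E[h(X^{(0)}) + Σ_{n=1}^{τ-1} (h(X^{(n)}) - h(X̃^{(n-1)}))] = π(h). -/

import Mathlib

open MeasureTheory Filter

/-- Unbiasedness of the Rhee–Glynn estimator: if the coupled chains share marginals at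
each lag, `E[h(X^{(n)})] → π(h)`, the series of expectations is (absolutely) summable,
the chains meet at an a.s. finite time `τ` (with `X^{(n)} = X̃^{(n-1)}` for `n ≥ τ`), and
the interchange of sum and expectation is valid, then
`E[h(X^{(0)}) + ∑_{n=1}^{τ-1} (h(X^{(n)}) - h(X̃^{(n-1)}))] = π(h)`. -/
theorem stmt10 {Ω S : Type*} [MeasurableSpace Ω] [MeasurableSpace S]
    (μ : Measure Ω) [IsProbabilityMeasure μ]
    (X Xt : ℕ → Ω → S) (h : S → ℝ) (πh : ℝ) (τ : Ω → ℕ)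
    (hτ1 : ∀ ω, 1 ≤ τ ω)
    (hint : ∀ n, Integrable (fun ω => h (X n ω)) μ)
    (hintt : ∀ n, Integrable (fun ω => h (Xt n ω)) μ)
    (hmarg : ∀ n, ∫ ω, h (Xt n ω) ∂μ = ∫ ω, h (X n ω) ∂μ)
    (hlim : Tendsto (fun n => ∫ ω, h (X n ω) ∂μ) atTop (nhds πh))
    (hsum : Summable fun n : ℕ => ∫ ω, |h (X (n + 1) ω) - h (Xt n ω)| ∂μ)
    (hmeet : ∀ᵐ ω ∂μ, ∀ n, τ ω ≤ n → X n ω = Xt (n - 1) ω)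
    (hH : Integrable
      (fun ω => h (X 0 ω) + ∑ n ∈ Finset.Icc 1 (τ ω - 1), (h (X n ω) - h (Xt (n - 1) ω))) μ)
    (hinterchange :
      ∫ ω, (∑' n : ℕ, (h (X (n + 1) ω) - h (Xt n ω))) ∂μ
        = ∑' n : ℕ, ∫ ω, (h (X (n + 1) ω) - h (Xt n ω)) ∂μ) :
    ∫ ω, (h (X 0 ω) + ∑ n ∈ Finset.Icc 1 (τ ω - 1), (h (X n ω) - h (Xt (n - 1) ω))) ∂μ
      = πh := by
  set a : ℕ → ℝ := fun n => ∫ ω, h (X n ω) ∂μ with ha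
  -- each integral term equals a telescoping difference
  have hterm : ∀ n : ℕ, (∫ ω, (h (X (n + 1) ω) - h (Xt n ω)) ∂μ) = a (n + 1) - a n := by
    intro n
    rw [integral_sub (hint (n + 1)) (hintt n), hmarg n]
  -- summability of the series of integrals
  have hsumm : Summable fun n : ℕ => ∫ ω, (h (X (n + 1) ω) - h (Xt n ω)) ∂μ := by
    apply Summable.of_abs
    apply Summable.of_nonneg_of_le (fun n => abs_nonneg _) _ hsum
    intro n
    calc |∫ ω, (h (X (n + 1) ω) - h (Xt n ω)) ∂μ|
        ≤ ∫ ω, |h (X (n + 1) ω) - h (Xt n ω)| ∂μ := by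
          simpa [Real.norm_eq_abs] using norm_integral_le_integral_norm (fun ω => h (X (n + 1) ω) - h (Xt n ω)) (μ := μ)
      _ = _ := rfl
  -- value of the series: telescoping
  have hval : (∑' n : ℕ, ∫ ω, (h (X (n + 1) ω) - h (Xt n ω)) ∂μ) = πh - a 0 := by
    have h1 : Tendsto (fun N => ∑ n ∈ Finset.range N,
        ∫ ω, (h (X (n + 1) ω) - h (Xt n ω)) ∂μ) atTop
        (nhds (∑' n : ℕ, ∫ ω, (h (X (n + 1) ω) - h (Xt n ω)) ∂μ)) :=
      hsumm.hasSum.tendsto_sum_nat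
    have h2 : Tendsto (fun N => ∑ n ∈ Finset.range N,
        ∫ ω, (h (X (n + 1) ω) - h (Xt n ω)) ∂μ) atTop (nhds (πh - a 0)) := by
      have : (fun N => ∑ n ∈ Finset.range N,
          ∫ ω, (h (X (n + 1) ω) - h (Xt n ω)) ∂μ) = fun N => a N - a 0 := by
        funext N
        simp only [hterm]
        exact Finset.sum_range_sub a N
      rw [this]
      exact hlim.sub_const (a 0)
    exact tendsto_nhds_unique h1 h2
  -- pointwise: the tsum equals the finite sum
  have hpt : ∀ᵐ ω ∂μ,
      (∑' n : ℕ, (h (X (n + 1) ω) - h (Xt n ω)))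
        = ∑ n ∈ Finset.Icc 1 (τ ω - 1), (h (X n ω) - h (Xt (n - 1) ω)) := by
    filter_upwards [hmeet] with ω hω
    have hzero : ∀ n ∉ Finset.range (τ ω - 1), (h (X (n + 1) ω) - h (Xt n ω)) = 0 := by
      intro n hn
      have hτn : τ ω ≤ n + 1 := by
        have := Finset.mem_range.not.mp hn
        omega
      have := hω (n + 1) hτn
      simp [this]
    rw [tsum_eq_sum hzero,
      show Finset.Icc 1 (τ ω - 1) = Finset.Ico 1 (τ ω - 1 + 1) from (Finset.Ico_add_one_right_eq_Icc ..).symm,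
      Finset.sum_Ico_eq_sum_range]
    simp only [Nat.add_sub_cancel, Nat.add_sub_cancel_left]
    exact Finset.sum_congr rfl fun i _ => by rw [Nat.add_comm 1 i]
  -- split the integral
  have hInt2 : Integrable
      (fun ω => ∑ n ∈ Finset.Icc 1 (τ ω - 1), (h (X n ω) - h (Xt (n - 1) ω))) μ := by
    exact (hH.sub (hint 0)).congr (Filter.Eventually.of_forall fun ω => by
      simp [Pi.sub_apply])
  rw [integral_add (hint 0) hInt2]
  have : ∫ ω, (∑ n ∈ Finset.Icc 1 (τ ω - 1), (h (X n ω) - h (Xt (n - 1) ω))) ∂μ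
      = πh - a 0 := by
    rw [← integral_congr_ae hpt, hinterchange, hval]
  rw [this]
  ring
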